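/- arXiv:1007.4357 — 2 statements merged into one kernel-verified Lean document; each statement's English description precedes it below -/
import Mathlib

section
/- Let n ≥ 1, let V = ℂ(q)^n with standard basis v_1,…,v_n, and let T : V⊗V → V⊗V be the ℂ(q)-linear map with T(v_i⊗v_j) = q^{−δ_{ij}} v_j⊗v_i and T(v_j⊗v_i) = q^{δ_{ij}} v_i⊗v_j − (q−q^{−1}) v_j⊗v_i for all 1 ≤ i ≤ j ≤ n. For 1 ≤ i ≤ 3 let Ψ_i : V^{⊗4} → V^{⊗4} apply T to the i-th and (i+1)-st tensor factors, and set Ψ = Ψ_2Ψ_1Ψ_3Ψ_2 + (q−q^{−1})(Ψ_1Ψ_2Ψ_1 + Ψ_1Ψ_3Ψ_2) + (q−q^{−1})^2 Ψ_1Ψ_2. Then Ψ satisfies the cubic Hecke equation (Ψ−1)(Ψ+q^2)(Ψ+q^{−2}) = 0 on V^{⊗4}; in particular Ψ is invertible, and Ψ^{−1} = Ψ_2Ψ_1Ψ_3Ψ_2 + (q−q^{−1})(Ψ_2Ψ_3Ψ_2 + Ψ_1Ψ_3Ψ_2) + (q−q^{−1})^2 Ψ_3Ψ_2. -/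
set_option synthInstance.maxHeartbeats 1000000
set_option maxHeartbeats 1000000
set_option maxSynthPendingDepth 3

noncomputable section
open TensorProduct

/-- The field `ℂ(q)` of rational functions. -/
abbrev Kq := RatFunc ℂ
/-- The variable `q`. -/
def qq : Kq := RatFunc.X

variable (n : ℕ)

/-- `V = ℂ(q)ⁿ`. -/
abbrev Vn (n : ℕ) := Fin n → Kq
/-- The standard basis vector `v_i` of `V`. -/
def sv (i : Fin n) : Vn n := Pi.basisFun Kq (Fin n) i

/-- The induced basis of `V ⊗ V`. -/
def bV2 : Module.Basis (Fin n × Fin n) Kq (Vn n ⊗[Kq] Vn n) :=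
  (Pi.basisFun Kq (Fin n)).tensorProduct (Pi.basisFun Kq (Fin n))

/-- The map `T : V ⊗ V → V ⊗ V`, defined on the standard basis by
`T(v_i ⊗ v_j) = q^{-δ_{ij}} v_j ⊗ v_i` and
`T(v_j ⊗ v_i) = q^{δ_{ij}} v_i ⊗ v_j − (q − q⁻¹) v_j ⊗ v_i` for `i ≤ j`. -/
def Tmap : Vn n ⊗[Kq] Vn n →ₗ[Kq] Vn n ⊗[Kq] Vn n :=
  (bV2 n).constr Kq fun p =>
    if p.1 ≤ p.2 then
      (if p.1 = p.2 then qq⁻¹ else 1) • (sv n p.2 ⊗ₜ[Kq] sv n p.1)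
    else
      (sv n p.2 ⊗ₜ[Kq] sv n p.1) - (qq - qq⁻¹) • (sv n p.1 ⊗ₜ[Kq] sv n p.2)

/-- `V^{⊗4}`, grouped as `(V ⊗ V) ⊗ (V ⊗ V)`. -/
abbrev V4 (n : ℕ) := (Vn n ⊗[Kq] Vn n) ⊗[Kq] (Vn n ⊗[Kq] Vn n)

/-- `Ψ₁` applies `T` to the first and second tensor factors. -/
def Psi1 : V4 n →ₗ[Kq] V4 n := TensorProduct.map (Tmap n) LinearMap.id

/-- `Ψ₃` applies `T` to the third and fourth tensor factors. -/
def Psi3 : V4 n →ₗ[Kq] V4 n := TensorProduct.map LinearMap.id (Tmap n)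

/-- Regrouping `(V⊗V)⊗(V⊗V) ≃ (V⊗(V⊗V))⊗V`, exhibiting the middle two factors. -/
def regroup : V4 n ≃ₗ[Kq] (Vn n ⊗[Kq] (Vn n ⊗[Kq] Vn n)) ⊗[Kq] Vn n :=
  (TensorProduct.assoc Kq (Vn n ⊗[Kq] Vn n) (Vn n) (Vn n)).symm ≪≫ₗ
    TensorProduct.congr (TensorProduct.assoc Kq (Vn n) (Vn n) (Vn n)) (LinearEquiv.refl Kq (Vn n))

/-- `Ψ₂` applies `T` to the second and third tensor factors. -/
def Psi2 : V4 n →ₗ[Kq] V4 n :=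
  (regroup n).symm.toLinearMap ∘ₗ
    TensorProduct.map (TensorProduct.map LinearMap.id (Tmap n)) LinearMap.id ∘ₗ
      (regroup n).toLinearMap

/-- The map `Ψ = Ψ₂Ψ₁Ψ₃Ψ₂ + (q−q⁻¹)(Ψ₁Ψ₂Ψ₁ + Ψ₁Ψ₃Ψ₂) + (q−q⁻¹)² Ψ₁Ψ₂`. -/
def PsiMap : V4 n →ₗ[Kq] V4 n :=
  Psi2 n ∘ₗ Psi1 n ∘ₗ Psi3 n ∘ₗ Psi2 n
    + (qq - qq⁻¹) • (Psi1 n ∘ₗ Psi2 n ∘ₗ Psi1 n + Psi1 n ∘ₗ Psi3 n ∘ₗ Psi2 n)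
    + (qq - qq⁻¹) ^ 2 • (Psi1 n ∘ₗ Psi2 n)

/-- The identity map of `V^{⊗4}`. -/
def idV4 : V4 n →ₗ[Kq] V4 n := LinearMap.id

/-- The candidate inverse `Ψ₂Ψ₁Ψ₃Ψ₂ + (q−q⁻¹)(Ψ₂Ψ₃Ψ₂ + Ψ₁Ψ₃Ψ₂) + (q−q⁻¹)² Ψ₃Ψ₂`. -/
def PsiInvMap : V4 n →ₗ[Kq] V4 n :=
  Psi2 n ∘ₗ Psi1 n ∘ₗ Psi3 n ∘ₗ Psi2 n
    + (qq - qq⁻¹) • (Psi2 n ∘ₗ Psi3 n ∘ₗ Psi2 n + Psi1 n ∘ₗ Psi3 n ∘ₗ Psi2 n)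
    + (qq - qq⁻¹) ^ 2 • (Psi3 n ∘ₗ Psi2 n)

/-!
Each `Ψᵢ` satisfies the Hecke relation `Ψᵢ² = 1 - (q - q⁻¹)Ψᵢ`, so it is invertible with
`Ψᵢ⁻¹ = Ψᵢ + (q - q⁻¹)`; moreover `Ψ₁Ψ₂Ψ₁ = Ψ₂Ψ₁Ψ₂` (the Yang–Baxter equation for `T`) and
`Ψ₁Ψ₃ = Ψ₃Ψ₁`. Expanding with the braid relation gives `Ψ = Ψ₂⁻¹ (Ψ₁Ψ₃⁻¹) Ψ₂`, and the proposed
inverse is `Ψ₂⁻¹ (Ψ₁⁻¹Ψ₃) Ψ₂`. So `Ψ` is conjugate to the product of the commuting operators `Ψ₁`,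
with eigenvalues `q⁻¹, -q`, and `Ψ₃⁻¹`, with eigenvalues `q, -q⁻¹`. The possible products
`1, -q², -q⁻²` are the roots of the cubic.
-/

section HeckeAlgebra

variable {K E : Type*} [Field K] [Ring E] [Algebra K E] {q : K}

def HeckeRelation (q : K) (x : E) : Prop := x * x = 1 - (q - q⁻¹) • x

namespace HeckeRelation

variable {x : E} (h : HeckeRelation q x)
include h

theorem mul_self : x * x = 1 - (q - q⁻¹) • x := h

theorem map {F : Type*} [Ring F] [Algebra K F] (f : E →ₐ[K] F) : HeckeRelation q (f x) := by
  rw [HeckeRelation, ← map_mul, h.mul_self, map_sub, map_smul, map_one]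

theorem mul_add_smul_one : x * (x + (q - q⁻¹) • 1) = 1 := by
  rw [mul_add, h.mul_self, mul_smul_one, sub_add_cancel]

theorem add_smul_one_mul : (x + (q - q⁻¹) • 1) * x = 1 := by
  rw [add_mul, h.mul_self, smul_one_mul, sub_add_cancel]

def unit : Eˣ := ⟨x, x + (q - q⁻¹) • 1, h.mul_add_smul_one, h.add_smul_one_mul⟩

theorem val_unit : (h.unit : E) = x := rfl

theorem val_inv_unit : ((h.unit⁻¹ : Eˣ) : E) = x + (q - q⁻¹) • 1 := rfl

theorem inv_unit : HeckeRelation (-q) ((h.unit⁻¹ : Eˣ) : E) := by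
  rw [HeckeRelation, val_inv_unit, inv_neg, neg_sub_neg]
  simp only [mul_add, add_mul, h.mul_self, smul_mul_assoc, mul_smul_comm, one_mul, mul_one]
  module

theorem sub_mul_add_eq_zero (hq : q ≠ 0) : (x - q⁻¹ • 1) * (x + q • 1) = 0 := by
  simp only [mul_add, sub_mul, h.mul_self, smul_mul_assoc, mul_smul_comm, one_mul, mul_one]
  match_scalars <;> field_simp <;> ring

end HeckeRelation

theorem cubic_eq_zero_of_quadratics {R : Type*} [CommRing R] {α δ p r : R}
    (hα : (α - r) * (α + p) = 0) (hδ : (δ + r) * (δ - p) = 0) :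
    (α * δ - p * r) * ((α * δ + p ^ 2) * (α * δ + r ^ 2)) = 0 := by
  -- `αδ - pr = (α - r)δ + r(δ - p) = (α + p)δ - p(δ + r)`, `αδ + p² = (α + p)δ - p(δ - p)` and
  -- `αδ + r² = (α - r)δ + r(δ + r)`.
  linear_combination ((α * δ - p * r) * δ ^ 2 + r * δ ^ 2 * (δ + r) - p * δ ^ 2 * (δ - p)) * hα
    + (-(p * r) * (α * δ - p * r) + r ^ 2 * δ * (α + p) + p ^ 2 * δ * (α - r)) * hδ

open scoped IsMulCommutative in
theorem HeckeRelation.cubic_mul_eq_zero (hq : q ≠ 0) {a δ : E} (ha : HeckeRelation q a)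
    (hδ : HeckeRelation (-q) δ) (hc : Commute a δ) :
    (a * δ - 1) * ((a * δ + q ^ 2 • 1) * (a * δ + q⁻¹ ^ 2 • 1)) = 0 := by
  -- `a` and `δ` generate a commutative subalgebra, where `linear_combination` applies.
  let S := Algebra.adjoin K ({a, δ} : Set E)
  have : IsMulCommutative S := Algebra.isMulCommutative_adjoin K (by
    simp only [Set.mem_insert_iff, Set.mem_singleton_iff]
    rintro x (rfl | rfl) y (rfl | rfl) <;> first | rfl | exact hc | exact hc.symm)
  let α : S := ⟨a, Algebra.subset_adjoin (by simp)⟩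
  let δ' : S := ⟨δ, Algebra.subset_adjoin (by simp)⟩
  have hα : (α - algebraMap K S q⁻¹) * (α + algebraMap K S q) = 0 :=
    Subtype.ext (by simpa [Algebra.algebraMap_eq_smul_one] using ha.sub_mul_add_eq_zero hq)
  have hδ' : (δ' + algebraMap K S q⁻¹) * (δ' - algebraMap K S q) = 0 :=
    Subtype.ext (by simpa [Algebra.algebraMap_eq_smul_one, sub_eq_add_neg] using
      hδ.sub_mul_add_eq_zero (neg_ne_zero.2 hq))
  have hcubic := cubic_eq_zero_of_quadratics hα hδ'
  rw [← map_mul, mul_inv_cancel₀ hq, map_one, ← map_pow, ← map_pow] at hcubic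
  simpa [Algebra.algebraMap_eq_smul_one] using congrArg Subtype.val hcubic

variable (q) in
def heckePsi (a b d : E) : E :=
  b * (a * (d * b)) + (q - q⁻¹) • (a * (b * a) + a * (d * b)) + (q - q⁻¹) ^ 2 • (a * b)

variable (q) in
def heckePsiInv (a b d : E) : E :=
  b * (a * (d * b)) + (q - q⁻¹) • (b * (d * b) + a * (d * b)) + (q - q⁻¹) ^ 2 • (d * b)

variable {a b d : E} (ha : HeckeRelation q a) (hb : HeckeRelation q b) (hd : HeckeRelation q d)
include ha hb hd

theorem heckePsi_eq_units (hab : a * (b * a) = b * (a * b)) :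
    heckePsi q a b d = ↑(hb.unit⁻¹ * (ha.unit * hd.unit⁻¹) * hb.unit) := by
  simp only [heckePsi, Units.val_mul, HeckeRelation.val_unit, HeckeRelation.val_inv_unit, add_mul,
    mul_add, smul_mul_assoc, mul_smul_comm, one_mul, mul_assoc, ← hab]
  module

theorem heckePsiInv_eq_units (had : Commute a d) :
    heckePsiInv q a b d = ↑(hb.unit⁻¹ * (ha.unit * hd.unit⁻¹) * hb.unit)⁻¹ := by
  have hc : Commute ha.unit⁻¹ hd.unit := (show Commute ha.unit hd.unit from Units.ext had).inv_left
  have hinv : (hb.unit⁻¹ * (ha.unit * hd.unit⁻¹) * hb.unit)⁻¹ =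
      hb.unit⁻¹ * (ha.unit⁻¹ * hd.unit) * hb.unit := by
    rw [hc.eq]; group
  rw [hinv]
  simp only [heckePsiInv, Units.val_mul, HeckeRelation.val_unit, HeckeRelation.val_inv_unit,
    add_mul, mul_add, smul_mul_assoc, mul_smul_comm, one_mul, mul_assoc]
  module

theorem heckePsi_cubic (hq : q ≠ 0) (hab : a * (b * a) = b * (a * b)) (had : Commute a d) :
    (heckePsi q a b d - 1) * ((heckePsi q a b d + q ^ 2 • 1) * (heckePsi q a b d + q⁻¹ ^ 2 • 1)) =
      0 := by
  let φ := MulSemiringAction.toAlgHom K E (ConjAct.toConjAct hb.unit⁻¹)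
  have hφ : heckePsi q a b d = φ (a * ↑hd.unit⁻¹) := by
    rw [heckePsi_eq_units ha hb hd hab]
    simp only [φ, MulSemiringAction.toAlgHom_apply, ConjAct.units_smul_def,
      ConjAct.ofConjAct_toConjAct, inv_inv, Units.val_mul, HeckeRelation.val_unit]
  rw [hφ]
  simpa using congrArg φ (ha.cubic_mul_eq_zero hq hd.inv_unit had.units_inv_right)

end HeckeAlgebra

section Braiding

variable {K : Type*} [Field K] (q : K) (n : ℕ)

def braiding : (Fin n → K) ⊗[K] (Fin n → K) →ₗ[K] (Fin n → K) ⊗[K] (Fin n → K) :=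
  ((Pi.basisFun K (Fin n)).tensorProduct (Pi.basisFun K (Fin n))).constr K fun p =>
    if p.1 ≤ p.2 then
      (if p.1 = p.2 then q⁻¹ else 1) • (Pi.basisFun K (Fin n) p.2 ⊗ₜ[K] Pi.basisFun K (Fin n) p.1)
    else
      (Pi.basisFun K (Fin n) p.2 ⊗ₜ[K] Pi.basisFun K (Fin n) p.1) -
        (q - q⁻¹) • (Pi.basisFun K (Fin n) p.1 ⊗ₜ[K] Pi.basisFun K (Fin n) p.2)

theorem Tmap_eq_braiding : Tmap n = braiding (qq : Kq) n := rfl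

def braiding₁₂ : Module.End K ((Fin n → K) ⊗[K] ((Fin n → K) ⊗[K] (Fin n → K))) :=
  (TensorProduct.assoc K _ _ _).conj ((braiding q n).rTensor (Fin n → K))

def braiding₂₃ : Module.End K ((Fin n → K) ⊗[K] ((Fin n → K) ⊗[K] (Fin n → K))) :=
  (braiding q n).lTensor (Fin n → K)

variable {n}

theorem braiding_single_tmul_single (i j : Fin n) :
    braiding q n (Pi.single i 1 ⊗ₜ Pi.single j 1) =
      if i ≤ j then (if i = j then q⁻¹ else 1) • (Pi.single j 1 ⊗ₜ Pi.single i 1)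
      else Pi.single j 1 ⊗ₜ Pi.single i 1 - (q - q⁻¹) • (Pi.single i 1 ⊗ₜ Pi.single j 1) := by
  have hij : Pi.single i 1 ⊗ₜ[K] Pi.single j 1 =
      (Pi.basisFun K (Fin n)).tensorProduct (Pi.basisFun K (Fin n)) (i, j) := by simp
  rw [hij, braiding, Module.Basis.constr_basis]
  simp

theorem braiding_single_tmul_single_of_lt {i j : Fin n} (h : i < j) :
    braiding q n (Pi.single i 1 ⊗ₜ Pi.single j 1) = Pi.single j 1 ⊗ₜ Pi.single i 1 := by
  rw [braiding_single_tmul_single, if_pos h.le, if_neg h.ne, one_smul]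

theorem braiding_single_tmul_single_self (i : Fin n) :
    braiding q n (Pi.single i 1 ⊗ₜ Pi.single i 1) = q⁻¹ • (Pi.single i 1 ⊗ₜ Pi.single i 1) := by
  rw [braiding_single_tmul_single, if_pos le_rfl, if_pos rfl]

theorem braiding_single_tmul_single_of_gt {i j : Fin n} (h : j < i) :
    braiding q n (Pi.single i 1 ⊗ₜ Pi.single j 1) =
      Pi.single j 1 ⊗ₜ Pi.single i 1 - (q - q⁻¹) • (Pi.single i 1 ⊗ₜ Pi.single j 1) := by
  rw [braiding_single_tmul_single, if_neg h.not_ge]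

theorem heckeRelation_braiding (hq : q ≠ 0) : HeckeRelation q (braiding q n) := by
  refine ((Pi.basisFun K (Fin n)).tensorProduct (Pi.basisFun K (Fin n))).ext fun ⟨i, j⟩ => ?_
  simp only [Module.Basis.tensorProduct_apply, Pi.basisFun_apply, Module.End.mul_apply,
    LinearMap.sub_apply, LinearMap.smul_apply, Module.End.one_apply]
  rcases lt_trichotomy i j with h | rfl | h
  · simp only [braiding_single_tmul_single_of_lt q h, braiding_single_tmul_single_of_gt q h]
  · simp only [braiding_single_tmul_single_self, map_smul, smul_smul]
    match_scalars
    field_simp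
    ring
  · simp only [braiding_single_tmul_single_of_lt q h, braiding_single_tmul_single_of_gt q h, map_sub,
      map_smul]

theorem braiding_braid (hq : q ≠ 0) :
    braiding₁₂ q n * (braiding₂₃ q n * braiding₁₂ q n) =
      braiding₂₃ q n * (braiding₁₂ q n * braiding₂₃ q n) := by
  refine ((Pi.basisFun K (Fin n)).tensorProduct
    ((Pi.basisFun K (Fin n)).tensorProduct (Pi.basisFun K (Fin n)))).ext fun ⟨i, j, k⟩ => ?_
  simp only [Module.Basis.tensorProduct_apply, Pi.basisFun_apply]
  rcases lt_trichotomy i j with hij | hij | hij <;> rcases lt_trichotomy j k with hjk | hjk | hjk <;>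
    rcases lt_trichotomy i k with hik | hik | hik
  all_goals first
    | (exfalso; order)
    | (subst_vars
       simp only [braiding₁₂, braiding₂₃, Module.End.mul_apply, LinearEquiv.conj_apply_apply,
         assoc_symm_tmul, assoc_tmul, LinearMap.rTensor_tmul, LinearMap.lTensor_tmul, map_sub, map_smul,
         sub_tmul, tmul_sub, ← smul_tmul', tmul_smul, smul_sub, smul_smul,
         braiding_single_tmul_single_self, braiding_single_tmul_single_of_lt,
         braiding_single_tmul_single_of_gt, *] <;>
       match_scalars <;> first | ring1 | (field_simp; ring1))

end Braiding

def rTensorRegroup : Module.End Kq (Vn n ⊗[Kq] (Vn n ⊗[Kq] Vn n)) →ₐ[Kq] Module.End Kq (V4 n) :=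
  ((regroup n).symm.conjAlgEquiv Kq).toAlgHom.comp (Module.End.rTensorAlgHom Kq _ (Vn n))

theorem rTensorRegroup_apply (f : Module.End Kq (Vn n ⊗[Kq] (Vn n ⊗[Kq] Vn n))) :
    rTensorRegroup n f =
      (regroup n).symm.toLinearMap ∘ₗ f.rTensor (Vn n) ∘ₗ (regroup n).toLinearMap :=
  rfl

theorem regroup_tmul (w x y z : Vn n) :
    regroup n (w ⊗ₜ x ⊗ₜ (y ⊗ₜ z)) = w ⊗ₜ (x ⊗ₜ y) ⊗ₜ z := by
  simp [regroup]

theorem regroup_symm_assoc_tmul (t : Vn n ⊗[Kq] Vn n) (y z : Vn n) :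
    (regroup n).symm (TensorProduct.assoc Kq _ _ _ (t ⊗ₜ y) ⊗ₜ z) = t ⊗ₜ (y ⊗ₜ z) := by
  induction t using TensorProduct.induction_on with
  | zero => simp
  | tmul a b => simp [regroup]
  | add s t hs ht => simp only [add_tmul, map_add, hs, ht]

theorem Psi1_eq_rTensorRegroup : Psi1 n = rTensorRegroup n (braiding₁₂ qq n) := by
  refine TensorProduct.ext_fourfold' fun w x y z => ?_
  simp only [Psi1, rTensorRegroup_apply, braiding₁₂, LinearMap.comp_apply, LinearEquiv.coe_coe,
    regroup_tmul, LinearMap.rTensor_tmul, LinearEquiv.conj_apply_apply, assoc_symm_tmul,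
    ← Tmap_eq_braiding, regroup_symm_assoc_tmul, map_tmul, LinearMap.id_apply]

theorem Psi2_eq_rTensorRegroup : Psi2 n = rTensorRegroup n (braiding₂₃ qq n) := rfl

theorem PsiMap_eq_heckePsi : PsiMap n = heckePsi qq (Psi1 n) (Psi2 n) (Psi3 n) := rfl

theorem PsiInvMap_eq_heckePsiInv : PsiInvMap n = heckePsiInv qq (Psi1 n) (Psi2 n) (Psi3 n) := rfl

theorem Psi_cubic_Hecke_general (n : ℕ) :
    ((PsiMap n - idV4 n) ∘ₗ (PsiMap n + qq ^ 2 • idV4 n) ∘ₗ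
        (PsiMap n + (qq⁻¹) ^ 2 • idV4 n) = 0) ∧
    Function.Bijective (PsiMap n) ∧
    (PsiMap n ∘ₗ PsiInvMap n = idV4 n ∧ PsiInvMap n ∘ₗ PsiMap n = idV4 n) := by
  have hq : (qq : Kq) ≠ 0 := RatFunc.X_ne_zero
  have hT : HeckeRelation qq (Tmap n) := heckeRelation_braiding qq hq
  have h₁ : HeckeRelation qq (Psi1 n) := hT.map (Module.End.rTensorAlgHom Kq _ _)
  have h₂ : HeckeRelation qq (Psi2 n) :=
    (hT.map (Module.End.lTensorAlgHom Kq _ (Vn n))).map (rTensorRegroup n)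
  have h₃ : HeckeRelation qq (Psi3 n) := hT.map (Module.End.lTensorAlgHom Kq _ (Vn n ⊗[Kq] Vn n))
  have hbraid : Psi1 n * (Psi2 n * Psi1 n) = Psi2 n * (Psi1 n * Psi2 n) := by
    simp only [Psi1_eq_rTensorRegroup, Psi2_eq_rTensorRegroup, ← map_mul, braiding_braid qq hq]
  have hcomm : Commute (Psi1 n) (Psi3 n) :=
    (LinearMap.rTensor_comp_lTensor _ _ _).trans (LinearMap.lTensor_comp_rTensor _ _ _).symm
  have hΨ := (PsiMap_eq_heckePsi n).trans (heckePsi_eq_units h₁ h₂ h₃ hbraid)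
  have hΨinv := (PsiInvMap_eq_heckePsiInv n).trans (heckePsiInv_eq_units h₁ h₂ h₃ hcomm)
  refine ⟨?_, ?_, ?_, ?_⟩
  · rw [PsiMap_eq_heckePsi, idV4, ← Module.End.one_eq_id, ← Module.End.mul_eq_comp,
      ← Module.End.mul_eq_comp]
    exact heckePsi_cubic h₁ h₂ h₃ hq hbraid hcomm
  · rw [hΨ, ← Module.End.isUnit_iff]
    exact Units.isUnit _
  · rw [hΨ, hΨinv]
    exact Units.mul_inv _
  · rw [hΨ, hΨinv]
    exact Units.inv_mul _

/-- **Ψ satisfies the cubic Hecke equation** `(Ψ−1)(Ψ+q²)(Ψ+q⁻²) = 0` on `V^{⊗4}`;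
in particular `Ψ` is invertible with the stated inverse. -/
theorem Psi_cubic_Hecke (n : ℕ) (hn : 1 ≤ n) :
    ((PsiMap n - idV4 n) ∘ₗ (PsiMap n + qq ^ 2 • idV4 n) ∘ₗ
        (PsiMap n + (qq⁻¹) ^ 2 • idV4 n) = 0) ∧
    Function.Bijective (PsiMap n) ∧
    (PsiMap n ∘ₗ PsiInvMap n = idV4 n ∧ PsiInvMap n ∘ₗ PsiMap n = idV4 n) :=
  Psi_cubic_Hecke_general n

end
end

section
/- Let n ≥ 3 and let 𝒰⁺_{q,n} be the ℂ(q)-algebra presented by generators u_1,…,u_{n−1}, w, z and relations: [u_i,[u_i,u_j]_q]_{q^{−1}}=0 if |i−j|=1; u_iu_j=u_ju_i if |i−j|>1; u_iw=wu_i for i≠1; u_iz=zu_i for i≠2; zw=wz; [u_1,[u_1,[u_1,w]]_{q²}]_{q^{−2}}=0; [u_2,[u_2,z]_q]_{q^{−1}}=0; [w,[w,u_1]_{q²}]_{q^{−2}}=−h·wz; [z,[u_2,[u_1,w]_{q²}]_q]_q=[w,[u_1,[u_2,z]_q]_q]_{q²}; and 2[z,[z,u_2]_q]_{q^{−1}}=h(z[u_1,u_2]_q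 w + w[u_2,u_1]_{q^{−1}} z + wu_1[z,u_2]_q + [u_2,z]_{q^{−1}}u_1w), where h=q−q^{−1}. Let U_q^+(sp_{2n}) be the ℂ(q)-algebra presented by generators E_0,E_1,…,E_{n−1} and relations: E_iE_j=E_jE_i for |i−j|≥2; E_i²E_j−(q+q^{−1})E_iE_jE_i+E_jE_i²=0 for 1≤i,j≤n−1 with |i−j|=1; E_0²E_1−(q²+q^{−2})E_0E_1E_0+E_1E_0²=0; and E_1³E_0−(q²+1+q^{−2})E_1²E_0E_1+(q²+1+q^{−2})E_1E_0E_1²−E_0E_1³=0. Then the assignment u_i ↦ E_i (1≤i≤n−1), w ↦ E_0, z ↦ 0 extends to a surjective ℂ(q)-algebra homomorphism μ : 𝒰⁺_{q,n} → U_q^+(sp_{2n}). -/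
noncomputable section

/-- The deformed commutator `[a,b]_v = ab − v·ba` in any `ℂ(q)`-algebra. -/
def cmt {A : Type*} [Ring A] [Algebra Kq A] (a b : A) (v : Kq) : A := a * b - v • (b * a)

/-- Generators `u_1, …, u_{n−1}, w, z` of `𝒰⁺_{q,n}`; `u i` stands for `u_{i+1}`. -/
inductive UGen (n : ℕ)
  | u (i : Fin (n - 1))
  | w
  | z

variable (n : ℕ)

/-- The generator `u_{i+1}` in the free algebra. -/
def fu (i : Fin (n - 1)) : FreeAlgebra Kq (UGen n) := FreeAlgebra.ι Kq (UGen.u i)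
/-- The generator `w` in the free algebra. -/
def fw : FreeAlgebra Kq (UGen n) := FreeAlgebra.ι Kq UGen.w
/-- The generator `z` in the free algebra. -/
def fz : FreeAlgebra Kq (UGen n) := FreeAlgebra.ι Kq UGen.z

/-- The defining relations of the algebra `𝒰⁺_{q,n}` (the uberalgebra of the quantum folding
`(so_{2n+2}, sp_{2n})`), in the generators `u_1,…,u_{n−1}, w, z`.  Here the generator `u i`
represents `u_{i+1}` and `[a,b]_v = ab − v·ba`. -/
inductive URel : FreeAlgebra Kq (UGen n) → FreeAlgebra Kq (UGen n) → Prop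
  | serre_u (i j : Fin (n - 1)) :
      (i : ℕ) + 1 = (j : ℕ) ∨ (j : ℕ) + 1 = (i : ℕ) →
      URel (cmt (fu n i) (cmt (fu n i) (fu n j) qq) qq⁻¹) 0
  | comm_u (i j : Fin (n - 1)) :
      (i : ℕ) + 1 < (j : ℕ) ∨ (j : ℕ) + 1 < (i : ℕ) →
      URel (fu n i * fu n j) (fu n j * fu n i)
  | comm_uw (i : Fin (n - 1)) : (i : ℕ) ≠ 0 → URel (fu n i * fw n) (fw n * fu n i)
  | comm_uz (i : Fin (n - 1)) : (i : ℕ) ≠ 1 → URel (fu n i * fz n) (fz n * fu n i)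
  | comm_zw : URel (fz n * fw n) (fw n * fz n)
  | serre_u1w (i : Fin (n - 1)) : (i : ℕ) = 0 →
      URel (cmt (fu n i) (cmt (fu n i) (cmt (fu n i) (fw n) 1) (qq ^ 2)) (qq⁻¹ ^ 2)) 0
  | serre_u2z (i : Fin (n - 1)) : (i : ℕ) = 1 →
      URel (cmt (fu n i) (cmt (fu n i) (fz n) qq) qq⁻¹) 0
  | rel_wwu (i : Fin (n - 1)) : (i : ℕ) = 0 →
      URel (cmt (fw n) (cmt (fw n) (fu n i) (qq ^ 2)) (qq⁻¹ ^ 2))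
        (-((qq - qq⁻¹) • (fw n * fz n)))
  | rel_zw (i j : Fin (n - 1)) : (i : ℕ) = 0 → (j : ℕ) = 1 →
      URel (cmt (fz n) (cmt (fu n j) (cmt (fu n i) (fw n) (qq ^ 2)) qq) qq)
        (cmt (fw n) (cmt (fu n i) (cmt (fu n j) (fz n) qq) qq) (qq ^ 2))
  | rel_zz (i j : Fin (n - 1)) : (i : ℕ) = 0 → (j : ℕ) = 1 →
      URel ((2 : Kq) • cmt (fz n) (cmt (fz n) (fu n j) qq) qq⁻¹)
        ((qq - qq⁻¹) •
          (fz n * cmt (fu n i) (fu n j) qq * fw n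
            + fw n * cmt (fu n j) (fu n i) qq⁻¹ * fz n
            + fw n * fu n i * cmt (fz n) (fu n j) qq
            + cmt (fu n j) (fz n) qq⁻¹ * fu n i * fw n))

/-- The algebra `𝒰⁺_{q,n}`. -/
abbrev UqnPlus := RingQuot (URel n)

/-- The generator `E_i` (`0 ≤ i ≤ n−1`) of the free algebra underlying `U_q^+(sp_{2n})`. -/
def fEsp (i : Fin n) : FreeAlgebra Kq (Fin n) := FreeAlgebra.ι Kq i

/-- The defining relations of `U_q^+(sp_{2n})` in the Chevalley generators `E_0, …, E_{n−1}`. -/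
inductive SPRel : FreeAlgebra Kq (Fin n) → FreeAlgebra Kq (Fin n) → Prop
  | comm (i j : Fin n) : (i : ℕ) + 2 ≤ (j : ℕ) ∨ (j : ℕ) + 2 ≤ (i : ℕ) →
      SPRel (fEsp n i * fEsp n j) (fEsp n j * fEsp n i)
  | serre (i j : Fin n) : 1 ≤ (i : ℕ) → 1 ≤ (j : ℕ) →
      (i : ℕ) + 1 = (j : ℕ) ∨ (j : ℕ) + 1 = (i : ℕ) →
      SPRel (fEsp n i * fEsp n i * fEsp n j + fEsp n j * fEsp n i * fEsp n i)
        ((qq + qq⁻¹) • (fEsp n i * fEsp n j * fEsp n i))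
  | serre01 (i j : Fin n) : (i : ℕ) = 0 → (j : ℕ) = 1 →
      SPRel (fEsp n i * fEsp n i * fEsp n j + fEsp n j * fEsp n i * fEsp n i)
        ((qq ^ 2 + qq⁻¹ ^ 2) • (fEsp n i * fEsp n j * fEsp n i))
  | serre10 (i j : Fin n) : (i : ℕ) = 0 → (j : ℕ) = 1 →
      SPRel (fEsp n j * fEsp n j * fEsp n j * fEsp n i
          + (qq ^ 2 + 1 + qq⁻¹ ^ 2) • (fEsp n j * fEsp n i * fEsp n j * fEsp n j))
        ((qq ^ 2 + 1 + qq⁻¹ ^ 2) • (fEsp n j * fEsp n j * fEsp n i * fEsp n j)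
          + fEsp n i * fEsp n j * fEsp n j * fEsp n j)

/-- `U_q^+(sp_{2n})`. -/
abbrev UqSP := RingQuot (SPRel n)

/-- The generator `E_i` of `U_q^+(sp_{2n})`. -/
def mEsp (i : Fin n) : UqSP n := RingQuot.mkAlgHom Kq (SPRel n) (fEsp n i)

/-!
Sending `z` to `0` turns every relation of `𝒰⁺_{q,n}` that involves `z` into `0 = 0` (the
right-hand side of `[w,[w,u_1]_{q²}]_{q^{-2}} = -h·wz` included). Expanding the `q`-commutators,
the remaining relations become the commutation of distant `E_i` and the three kinds of Serre
relations of `U_q^+(sp_{2n})`. Surjectivity holds because the `E_i` generate.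
-/

lemma qq_ne_zero : qq ≠ 0 := RatFunc.X_ne_zero

section Commutators

variable {A : Type*} [Ring A] [Algebra Kq A]

lemma AlgHom.map_cmt {B : Type*} [Ring B] [Algebra Kq B] (f : A →ₐ[Kq] B) (a b : A) (v : Kq) :
    f (cmt a b v) = cmt (f a) (f b) v := by
  simp only [cmt, map_sub, map_mul, map_smul]

lemma cmt_cmt_inv {v : Kq} (hv : v ≠ 0) (a b : A) :
    cmt a (cmt a b v) v⁻¹ = a * a * b + b * a * a - (v + v⁻¹) • (a * b * a) := by
  simp only [cmt, mul_sub, sub_mul, smul_sub, mul_smul_comm, smul_mul_assoc, smul_smul,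
    inv_mul_cancel₀ hv, one_smul, add_smul, mul_assoc]
  abel

lemma cmt_cmt_inv_cmt_one {v : Kq} (hv : v ≠ 0) (a b : A) :
    cmt a (cmt a (cmt a b 1) v) v⁻¹
      = (a * a * a * b + (v + 1 + v⁻¹) • (a * b * a * a))
        - ((v + 1 + v⁻¹) • (a * a * b * a) + b * a * a * a) := by
  simp only [cmt, mul_sub, sub_mul, smul_sub, mul_smul_comm, smul_mul_assoc, smul_smul,
    inv_mul_cancel₀ hv, one_smul, add_smul, mul_assoc]
  abel

end Commutators

section Relations

variable {n}

lemma mEsp_mul_comm {i j : Fin n} (h : (i : ℕ) + 2 ≤ j ∨ (j : ℕ) + 2 ≤ i) :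
    mEsp n i * mEsp n j = mEsp n j * mEsp n i := by
  simpa only [mEsp, map_mul] using RingQuot.mkAlgHom_rel Kq (SPRel.comm i j h)

lemma mEsp_serre {i j : Fin n} (hi : 1 ≤ (i : ℕ)) (hj : 1 ≤ (j : ℕ))
    (h : (i : ℕ) + 1 = j ∨ (j : ℕ) + 1 = i) :
    mEsp n i * mEsp n i * mEsp n j + mEsp n j * mEsp n i * mEsp n i
      = (qq + qq⁻¹) • (mEsp n i * mEsp n j * mEsp n i) := by
  simpa only [mEsp, map_mul, map_add, map_smul] using
    RingQuot.mkAlgHom_rel Kq (SPRel.serre i j hi hj h)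

lemma mEsp_serre01 {i j : Fin n} (hi : (i : ℕ) = 0) (hj : (j : ℕ) = 1) :
    mEsp n i * mEsp n i * mEsp n j + mEsp n j * mEsp n i * mEsp n i
      = (qq ^ 2 + (qq ^ 2)⁻¹) • (mEsp n i * mEsp n j * mEsp n i) := by
  simpa only [mEsp, map_mul, map_add, map_smul, inv_pow] using
    RingQuot.mkAlgHom_rel Kq (SPRel.serre01 i j hi hj)

lemma mEsp_serre10 {i j : Fin n} (hi : (i : ℕ) = 0) (hj : (j : ℕ) = 1) :
    mEsp n j * mEsp n j * mEsp n j * mEsp n i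
        + (qq ^ 2 + 1 + (qq ^ 2)⁻¹) • (mEsp n j * mEsp n i * mEsp n j * mEsp n j)
      = (qq ^ 2 + 1 + (qq ^ 2)⁻¹) • (mEsp n j * mEsp n j * mEsp n i * mEsp n j)
        + mEsp n i * mEsp n j * mEsp n j * mEsp n j := by
  simpa only [mEsp, map_mul, map_add, map_smul, inv_pow] using
    RingQuot.mkAlgHom_rel Kq (SPRel.serre10 i j hi hj)

lemma adjoin_range_mEsp : Algebra.adjoin Kq (Set.range (mEsp n)) = ⊤ := by
  have hE : mEsp n = RingQuot.mkAlgHom Kq (SPRel n) ∘ FreeAlgebra.ι Kq := rfl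
  rw [hE, Set.range_comp, ← AlgHom.map_adjoin, FreeAlgebra.adjoin_range_ι, Algebra.map_top,
    AlgHom.range_eq_top]
  exact RingQuot.mkAlgHom_surjective Kq (SPRel n)

end Relations

section Folding

variable {n} (hn : 0 < n)

def foldingGen : UGen n → UqSP n
  | .u i => mEsp n ⟨i + 1, Nat.add_lt_of_lt_sub i.isLt⟩
  | .w => mEsp n ⟨0, hn⟩
  | .z => 0

lemma lift_foldingGen_fu (i : Fin (n - 1)) :
    FreeAlgebra.lift Kq (foldingGen hn) (fu n i)
      = mEsp n ⟨i + 1, Nat.add_lt_of_lt_sub i.isLt⟩ :=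
  FreeAlgebra.lift_ι_apply _ _

lemma lift_foldingGen_fw : FreeAlgebra.lift Kq (foldingGen hn) (fw n) = mEsp n ⟨0, hn⟩ :=
  FreeAlgebra.lift_ι_apply _ _

lemma lift_foldingGen_fz : FreeAlgebra.lift Kq (foldingGen hn) (fz n) = 0 :=
  FreeAlgebra.lift_ι_apply _ _

lemma lift_foldingGen_respects_URel ⦃a b : FreeAlgebra Kq (UGen n)⦄ (r : URel n a b) :
    FreeAlgebra.lift Kq (foldingGen hn) a = FreeAlgebra.lift Kq (foldingGen hn) b := by
  have hq2 : qq ^ 2 ≠ 0 := pow_ne_zero 2 qq_ne_zero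
  cases r with
  | serre_u i j h =>
    rw [AlgHom.map_cmt, AlgHom.map_cmt, lift_foldingGen_fu, lift_foldingGen_fu, map_zero,
      cmt_cmt_inv qq_ne_zero, sub_eq_zero]
    exact mEsp_serre (by simp) (by simp) (by simp only; omega)
  | comm_u i j h =>
    rw [map_mul, map_mul, lift_foldingGen_fu, lift_foldingGen_fu]
    exact mEsp_mul_comm (by simp only; omega)
  | comm_uw i h =>
    rw [map_mul, map_mul, lift_foldingGen_fu, lift_foldingGen_fw]
    exact mEsp_mul_comm (by simp only; omega)
  | serre_u1w i h =>
    rw [AlgHom.map_cmt, AlgHom.map_cmt, AlgHom.map_cmt, lift_foldingGen_fu, lift_foldingGen_fw,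
      map_zero, inv_pow, cmt_cmt_inv_cmt_one hq2, sub_eq_zero]
    exact mEsp_serre10 rfl (by simp [h])
  | rel_wwu i h =>
    rw [AlgHom.map_cmt, AlgHom.map_cmt, lift_foldingGen_fw, lift_foldingGen_fu, inv_pow,
      cmt_cmt_inv hq2, map_neg, map_smul, map_mul, lift_foldingGen_fz, mul_zero, smul_zero,
      neg_zero, sub_eq_zero]
    exact mEsp_serre01 rfl (by simp [h])
  | _ => simp [cmt, lift_foldingGen_fz]

/-- The paper's `μ`. -/
def folding : UqnPlus n →ₐ[Kq] UqSP n :=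
  RingQuot.liftAlgHom Kq ⟨FreeAlgebra.lift Kq (foldingGen hn), lift_foldingGen_respects_URel hn⟩

lemma folding_mk (x : FreeAlgebra Kq (UGen n)) :
    folding hn (RingQuot.mkAlgHom Kq (URel n) x) = FreeAlgebra.lift Kq (foldingGen hn) x :=
  RingQuot.liftAlgHom_mkAlgHom_apply _ _ _ _

lemma mEsp_mem_range_folding (i : Fin n) : mEsp n i ∈ (folding hn).range := by
  rw [AlgHom.mem_range]
  by_cases hi : (i : ℕ) = 0
  · refine ⟨RingQuot.mkAlgHom Kq (URel n) (fw n), ?_⟩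
    rw [folding_mk, lift_foldingGen_fw]
    exact congrArg (mEsp n) (Fin.ext hi.symm)
  · refine ⟨RingQuot.mkAlgHom Kq (URel n) (fu n ⟨i - 1, by omega⟩), ?_⟩
    rw [folding_mk, lift_foldingGen_fu]
    exact congrArg (mEsp n) (Fin.ext (by simp only; omega))

lemma folding_surjective : Function.Surjective (folding hn) := by
  rw [← AlgHom.range_eq_top, eq_top_iff, ← adjoin_range_mEsp, Algebra.adjoin_le_iff]
  rintro _ ⟨i, rfl⟩
  exact mEsp_mem_range_folding hn i

end Folding

/-- **The homomorphism `μ : 𝒰⁺_{q,n} ↠ U_q^+(sp_{2n})`** (Theorem on the folding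
`(so_{2n+2}, sp_{2n})`): the assignment `u_i ↦ E_i`, `w ↦ E₀`, `z ↦ 0` extends to a surjective
algebra homomorphism. -/
theorem uqn_to_sp_homomorphism (n : ℕ) (hn : 3 ≤ n) :
    ∃ f : UqnPlus n →ₐ[Kq] UqSP n,
      (∀ i : Fin (n - 1),
        f (RingQuot.mkAlgHom Kq (URel n) (fu n i))
          = mEsp n ⟨(i : ℕ) + 1, by have := i.isLt; omega⟩) ∧
      f (RingQuot.mkAlgHom Kq (URel n) (fw n)) = mEsp n ⟨0, by omega⟩ ∧
      f (RingQuot.mkAlgHom Kq (URel n) (fz n)) = 0 ∧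
      Function.Surjective f := by
  have hn₀ : 0 < n := by omega
  exact ⟨folding hn₀, fun i ↦ by rw [folding_mk, lift_foldingGen_fu],
    by rw [folding_mk, lift_foldingGen_fw], by rw [folding_mk, lift_foldingGen_fz],
    folding_surjective hn₀⟩
end
end
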